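/- arXiv:0705.3599 — 11 statements merged into one kernel-verified Lean document; each statement's English description precedes it below -/
import Mathlib

section
/- Let A be a 3×3 integer symmetric matrix with A₁₁ = A₂₂ = 0 and A₁₂ = 2, and suppose A is cyclotomic. Then A₁₃ = A₂₃ = 0. (Consequently the 2×2 matrix [[0,2],[2,0]] is a maximal indecomposable cyclotomic matrix: it cannot be extended to a strictly larger indecomposable cyclotomic matrix.) -/
/-!
If every eigenvalue of the real symmetric matrix `B` lies in `[-2, 2]`, then `2 - B` and `B + 2`
are positive semidefinite, so their determinants are nonnegative. For
`B = !![0, 2, a; 2, 0, b; a, b, c]` these determinants are `-2 (a + b)²` and `-2 (a - b)²`,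
which forces `a + b = a - b = 0`.
-/

open Matrix

/-- An integer symmetric matrix is cyclotomic if all its real eigenvalues lie in `[-2,2]`. -/
def IsCyclo {n : ℕ} (A : Matrix (Fin n) (Fin n) ℤ) : Prop :=
  ∀ μ ∈ spectrum ℝ (A.map ((↑) : ℤ → ℝ)), |μ| ≤ 2

lemma Matrix.IsHermitian.det_nonneg_of_spectrum_nonneg {ι : Type*} [Fintype ι] [DecidableEq ι]
    {M : Matrix ι ι ℝ} (hM : M.IsHermitian) (h : ∀ μ ∈ spectrum ℝ M, 0 ≤ μ) : 0 ≤ M.det := by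
  rw [hM.det_eq_prod_eigenvalues]
  exact Finset.prod_nonneg fun i _ => h _ (hM.eigenvalues_mem_spectrum_real i)

namespace IsCyclo

variable {n : ℕ} {A : Matrix (Fin n) (Fin n) ℤ}

lemma isHermitian_map (hA : A.IsSymm) : (A.map ((↑) : ℤ → ℝ)).IsHermitian := by
  ext i j
  simp [hA.apply]

lemma det_two_sub_nonneg (hA : A.IsSymm) (hcyc : IsCyclo A) :
    0 ≤ (2 - A.map ((↑) : ℤ → ℝ)).det := by
  have hM : (2 - A.map ((↑) : ℤ → ℝ)).IsHermitian :=
    (IsSelfAdjoint.ofNat 2).sub (isHermitian_map hA)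
  refine hM.det_nonneg_of_spectrum_nonneg ?_
  rw [← map_ofNat (algebraMap ℝ _) 2, ← spectrum.singleton_sub_eq]
  rintro _ ⟨_, rfl, μ, hμ, rfl⟩
  linarith [(abs_le.mp (hcyc μ hμ)).2]

lemma det_add_two_nonneg (hA : A.IsSymm) (hcyc : IsCyclo A) :
    0 ≤ (A.map ((↑) : ℤ → ℝ) + 2).det := by
  have hM : (A.map ((↑) : ℤ → ℝ) + 2).IsHermitian :=
    (isHermitian_map hA).add (IsSelfAdjoint.ofNat 2)
  refine hM.det_nonneg_of_spectrum_nonneg ?_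
  rw [← map_ofNat (algebraMap ℝ _) 2, ← spectrum.add_singleton_eq]
  rintro _ ⟨μ, hμ, _, rfl, rfl⟩
  linarith [(abs_le.mp (hcyc μ hμ)).1]

end IsCyclo

lemma det_two_sub_eq (a b c : ℝ) : (2 - !![0, 2, a; 2, 0, b; a, b, c]).det = -2 * (a + b) ^ 2 := by
  simp only [det_fin_three, Matrix.sub_apply, ofNat_apply, of_apply, cons_val', cons_val_zero,
    cons_val_one, cons_val, cons_val_fin_one, Fin.reduceEq, ↓reduceIte, Nat.cast_ofNat,
    Nat.cast_zero]
  ring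

lemma det_add_two_eq (a b c : ℝ) : (!![0, 2, a; 2, 0, b; a, b, c] + 2).det = -2 * (a - b) ^ 2 := by
  simp only [det_fin_three, Matrix.add_apply, ofNat_apply, of_apply, cons_val', cons_val_zero,
    cons_val_one, cons_val, cons_val_fin_one, Fin.reduceEq, ↓reduceIte, Nat.cast_ofNat,
    Nat.cast_zero]
  ring

/-- If a `3×3` cyclotomic integer symmetric matrix has
`A₁₁ = A₂₂ = 0` and `A₁₂ = 2`, then `A₁₃ = A₂₃ = 0`. -/
theorem extend_0220_forces_zeros
    (A : Matrix (Fin 3) (Fin 3) ℤ) (hsymm : A.IsSymm)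
    (h00 : A 0 0 = 0) (h11 : A 1 1 = 0) (h01 : A 0 1 = 2)
    (hcyc : IsCyclo A) :
    A 0 2 = 0 ∧ A 1 2 = 0 := by
  have hB : A.map ((↑) : ℤ → ℝ) =
      !![0, 2, (A 0 2 : ℝ); 2, 0, (A 1 2 : ℝ); (A 0 2 : ℝ), (A 1 2 : ℝ), (A 2 2 : ℝ)] := by
    ext i j
    fin_cases i <;> fin_cases j <;> simp [h00, h11, h01, hsymm.apply 0, hsymm.apply 1]
  have hsum : (A 0 2 + A 1 2 : ℝ) = 0 := sq_nonpos_iff _ |>.mp <| by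
    have := hcyc.det_two_sub_nonneg hsymm
    rw [hB, det_two_sub_eq] at this
    linarith
  have hdiff : (A 0 2 - A 1 2 : ℝ) = 0 := sq_nonpos_iff _ |>.mp <| by
    have := hcyc.det_add_two_nonneg hsymm
    rw [hB, det_add_two_eq] at this
    linarith
  exact_mod_cast (⟨by linarith, by linarith⟩ : (A 0 2 : ℝ) = 0 ∧ (A 1 2 : ℝ) = 0)
end

section
/- Let A be an n×n indecomposable cyclotomic integer symmetric matrix. Then one of the following holds: (a) every entry of A has absolute value at most 1; (b) n = 1 and A = (2) or A = (−2); (c) n = 2 and A is equivalent to [[0,2],[2,0]]. In other words, apart from matrices equivalent to (2) or [[0,2],[2,0]], every indecomposable cyclotomic matrix is the adjacency matrix of a cyclotomic charged signed graph. -/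
/-! For a real symmetric matrix `B` with spectrum in `[-c, c]`, the matrix `c² - B²` is positive
semidefinite, so every row of `B` has squared length `(B²)ᵢᵢ ≤ c²`. For a cyclotomic integer
matrix this bounds each row's sum of squares by `4`: an entry of absolute value at least `2` is
`±2` and the only nonzero entry of its row (and, by symmetry, of its column). If it sits at
`(i, j)`, no edge of the graph of `A` leaves `{i, j}`, so by connectivity `{i, j}` is the whole
index set, and `A` is `(±2)` or `[[0, ±2], [±2, 0]]`. -/

open Matrix

/-- Two integer symmetric matrices are equivalent if `A = s • (P * B * Pᵀ)` for some
sign `s ∈ {1,-1}` and signed permutation matrix `P` (an integer matrix with `P * Pᵀ = 1`). -/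
def MEquiv {n : ℕ} (A B : Matrix (Fin n) (Fin n) ℤ) : Prop :=
  ∃ (s : ℤ) (P : Matrix (Fin n) (Fin n) ℤ),
    (s = 1 ∨ s = -1) ∧ P * Pᵀ = 1 ∧ A = s • (P * B * Pᵀ)

open scoped MatrixOrder in
theorem Matrix.IsHermitian.sum_sq_apply_le {ι : Type*} [Fintype ι] [DecidableEq ι]
    {B : Matrix ι ι ℝ} (hB : B.IsHermitian) {c : ℝ} (hc : ∀ μ ∈ spectrum ℝ B, |μ| ≤ c)
    (i : ι) : ∑ j, B i j ^ 2 ≤ c ^ 2 := by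
  have hpsd : (c ^ 2 • (1 : Matrix ι ι ℝ) - B * B).PosSemidef := by
    rw [← nonneg_iff_posSemidef]
    have hcfc : c ^ 2 • (1 : Matrix ι ι ℝ) - B * B = cfc (fun x => c ^ 2 - x ^ 2) B := by
      rw [cfc_sub _ _ B, cfc_const _ B, cfc_pow_id B 2, sq B, Algebra.algebraMap_eq_smul_one]
    rw [hcfc]
    exact cfc_nonneg fun x hx => by nlinarith [abs_le.mp (hc x hx)]
  have hdiag : 0 ≤ (c ^ 2 • (1 : Matrix ι ι ℝ) - B * B) i i := hpsd.diag_nonneg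
  have hBs := isHermitian_iff_isSymm.mp hB
  simpa [mul_apply, sq, hBs.apply i] using hdiag

theorem IsCyclo.sum_sq_apply_le_four {n : ℕ} {A : Matrix (Fin n) (Fin n) ℤ} (hsymm : A.IsSymm)
    (hcyc : IsCyclo A) (i : Fin n) : ∑ j, A i j ^ 2 ≤ 4 := by
  have hB : (A.map ((↑) : ℤ → ℝ)).IsHermitian := isHermitian_iff_isSymm.mpr (hsymm.map _)
  exact_mod_cast (by simpa using hB.sum_sq_apply_le hcyc i : ∑ j, (A i j : ℝ) ^ 2 ≤ 2 ^ 2)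

theorem Int.abs_eq_two_and_eq_zero_of_sum_sq_le_four {ι : Type*} [Fintype ι] [DecidableEq ι]
    {f : ι → ℤ} (hf : ∑ k, f k ^ 2 ≤ 4) {j : ι} (hj : 2 ≤ |f j|) :
    |f j| = 2 ∧ ∀ k ≠ j, f k = 0 := by
  have hsplit := Finset.add_sum_erase Finset.univ (fun k => f k ^ 2) (Finset.mem_univ j)
  have hnonneg : ∀ k ∈ Finset.univ.erase j, 0 ≤ f k ^ 2 := fun k _ => sq_nonneg _
  have hj4 : 4 ≤ f j ^ 2 := by nlinarith [sq_abs (f j)]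
  have hrest : ∑ k ∈ Finset.univ.erase j, f k ^ 2 = 0 :=
    le_antisymm (by omega) (Finset.sum_nonneg hnonneg)
  refine ⟨?_, fun k hk => ?_⟩
  · nlinarith [sq_abs (f j)]
  · exact pow_eq_zero_iff two_ne_zero |>.mp <|
      (Finset.sum_eq_zero_iff_of_nonneg hnonneg).mp hrest k (by simp [hk])

theorem SimpleGraph.Preconnected.mem_of_forall_adj_mem {V : Type*} {G : SimpleGraph V}
    (hG : G.Preconnected) {S : Set V} (hS : ∀ v w, v ∈ S → G.Adj v w → w ∈ S) {u : V}
    (hu : u ∈ S) (v : V) : v ∈ S := by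
  by_contra hv
  obtain ⟨d, -, hd₁, hd₂⟩ := (hG u v).some.exists_boundary_dart S hu hv
  exact hd₂ (hS _ _ hd₁ d.adj)

theorem Matrix.IsSymm.eq_or_eq_of_apply_eq_zero {ι α : Type*} [Zero α] {A : Matrix ι ι α}
    (hsymm : A.IsSymm) (hconn : (SimpleGraph.fromRel (fun i j => A i j ≠ 0)).Preconnected)
    {i j : ι} (hi : ∀ k ≠ j, A i k = 0) (hj : ∀ k ≠ i, A j k = 0) (k : ι) : k = i ∨ k = j := by
  refine hconn.mem_of_forall_adj_mem (S := {i, j}) ?_ (Set.mem_insert i _) k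
  rintro v w hv ⟨-, hvw⟩
  have hvw : A v w ≠ 0 := hvw.elim id fun h => by rwa [hsymm.apply w v]
  rcases hv with rfl | rfl
  · exact Or.inr (by_contra fun hw => hvw (hi w hw))
  · exact Or.inl (by_contra fun hw => hvw (hj w hw))

theorem mEquiv_antidiag_of_abs_eq_two {a : ℤ} (ha : |a| = 2) :
    MEquiv !![0, a; a, 0] !![0, 2; 2, 0] := by
  rcases (abs_eq zero_le_two).mp ha with rfl | rfl
  · exact ⟨1, 1, Or.inl rfl, by simp, by simp⟩
  · exact ⟨-1, 1, Or.inr rfl, by simp, by simp⟩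

theorem exists_reindex_eq_two_or_neg_two {n : ℕ} {A : Matrix (Fin n) (Fin n) ℤ} {i : Fin n}
    (hcover : ∀ k, k = i) (h2 : |A i i| = 2) :
    ∃ e : Fin n ≃ Fin 1, reindex e e A = !![2] ∨ reindex e e A = !![-2] := by
  let e : Fin n ≃ Fin 1 := (Equiv.ofBijective (fun _ => i)
    ⟨Function.injective_of_subsingleton _, fun k => ⟨0, (hcover k).symm⟩⟩).symm
  have hA : reindex e e A = !![A i i] := by ext a b; fin_cases a; fin_cases b; rfl
  refine ⟨e, ?_⟩
  rcases (abs_eq zero_le_two).mp h2 with h | h <;> simp [hA, h]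

theorem exists_mEquiv_antidiag {n : ℕ} {A : Matrix (Fin n) (Fin n) ℤ}
    (hsymm : A.IsSymm) {i j : Fin n} (hne : i ≠ j) (hcover : ∀ k, k = i ∨ k = j)
    (hi : ∀ k ≠ j, A i k = 0) (hj : ∀ k ≠ i, A j k = 0) (h2 : |A i j| = 2) :
    ∃ e : Fin n ≃ Fin 2, MEquiv (reindex e e A) !![0, 2; 2, 0] := by
  have hinj : Function.Injective ![i, j] := by
    intro a b hab
    fin_cases a <;> fin_cases b <;> simp_all [eq_comm]
  have hsurj : Function.Surjective ![i, j] := fun k =>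
    (hcover k).elim (fun h => ⟨0, h.symm⟩) fun h => ⟨1, h.symm⟩
  let e : Fin n ≃ Fin 2 := (Equiv.ofBijective _ ⟨hinj, hsurj⟩).symm
  have hA : reindex e e A = !![0, A i j; A i j, 0] := by
    ext a b
    fin_cases a <;> fin_cases b
    exacts [hi i hne, rfl, hsymm.apply i j, hj j hne.symm]
  exact ⟨e, hA ▸ mEquiv_antidiag_of_abs_eq_two h2⟩

/-- An indecomposable cyclotomic integer symmetric matrix either has
all entries of absolute value at most `1`, or is the `1×1` matrix `(2)` or `(-2)`,
or is (after a bijective relabelling of indices) equivalent to `[[0,2],[2,0]]`. -/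
theorem indecomposable_cyclotomic_entries_small_or_exceptional
    {n : ℕ} (A : Matrix (Fin n) (Fin n) ℤ) (hsymm : A.IsSymm)
    (hconn : (SimpleGraph.fromRel (fun i j => A i j ≠ 0)).Connected)
    (hcyc : IsCyclo A) :
    (∀ i j, |A i j| ≤ 1)
    ∨ (∃ e : Fin n ≃ Fin 1, Matrix.reindex e e A = !![2] ∨ Matrix.reindex e e A = !![-2])
    ∨ (∃ e : Fin n ≃ Fin 2, MEquiv (Matrix.reindex e e A) !![0,2;2,0]) := by
  refine or_iff_not_imp_left.mpr fun hsmall => ?_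
  obtain ⟨i, j, hij⟩ : ∃ i j, 1 < |A i j| := by simpa using hsmall
  have hrow := hcyc.sum_sq_apply_le_four hsymm
  obtain ⟨hij2, hi⟩ := Int.abs_eq_two_and_eq_zero_of_sum_sq_le_four (hrow i) (j := j) (by omega)
  obtain ⟨-, hj⟩ := Int.abs_eq_two_and_eq_zero_of_sum_sq_le_four (hrow j) (j := i)
    (by rw [hsymm.apply]; omega)
  have hcover := hsymm.eq_or_eq_of_apply_eq_zero hconn.preconnected hi hj
  rcases eq_or_ne i j with rfl | hne
  · exact Or.inl (exists_reindex_eq_two_or_neg_two (fun k => (hcover k).elim id id) hij2)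
  · exact Or.inr (exists_mEquiv_antidiag hsymm hne hcover hi hj hij2)
end

section
/- Let A be a cyclotomic signed graph (an integer symmetric matrix with zero diagonal, all entries in {-1,0,1}, and all eigenvalues in [-2,2]) containing a triangle on distinct vertices v, w, x: A v w ≠ 0, A w x ≠ 0, A v x ≠ 0. If z is a fourth vertex (distinct from v, w, x), then the number of elements of {v, w, x} adjacent to z is even (i.e. 0 or 2). -/
/-!
Let `p = A v w * A w x * A v x = ±1` be the sign of the triangle and let `u` be supported on it
with entries `1, A w x * A v x, A v w * A w x` at `v, w, x`. Each edge then contributes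
`u i * A i j * u j = p` to the quadratic form, so `uᵀ (p • A) u = 6 = 2 * (uᵀ u)`. As `p • A` is
again cyclotomic, `2 • 1 - p • A` is positive semidefinite and `u` lies in its kernel, i.e.
`(p • A) u = 2 u`. At `z`, where `u` vanishes, this reads `∑_{y ∈ {v, w, x}} A z y * u y = 0`:
a vanishing sum of terms in `{-1, 0, 1}`, whose number of nonzero terms is therefore even.
-/

open Matrix

open Finset

theorem Matrix.IsHermitian.mulVec_eq_smul_of_dotProduct_mulVec_eq {ι : Type*} [Fintype ι]
    [DecidableEq ι] {C : Matrix ι ι ℝ} (hC : C.IsHermitian) {r : ℝ}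
    (hle : ∀ μ ∈ spectrum ℝ C, μ ≤ r) {u : ι → ℝ} (hu : u ⬝ᵥ C *ᵥ u = r * (u ⬝ᵥ u)) :
    C *ᵥ u = r • u := by
  have hM : (r • 1 - C).IsHermitian := by
    simpa [isHermitian_iff_isSymm] using (isSymm_one.smul r).sub (isHermitian_iff_isSymm.mp hC)
  have hpsd : (r • 1 - C).PosSemidef := by
    refine hM.posSemidef_iff_eigenvalues_nonneg.mpr fun i => ?_
    have hmem : hM.eigenvalues i ∈ spectrum ℝ (algebraMap ℝ _ r - C) := by
      rw [Algebra.algebraMap_eq_smul_one]; exact hM.eigenvalues_mem_spectrum_real i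
    rw [← spectrum.singleton_sub_eq] at hmem
    obtain ⟨_, rfl, μ, hμ, hi⟩ := hmem
    simpa [← hi] using hle μ hμ
  have hzero : star u ⬝ᵥ (r • 1 - C) *ᵥ u = 0 := by
    simp [sub_mulVec, dotProduct_sub, hu, smul_mulVec, dotProduct_smul]
  have := (hpsd.dotProduct_mulVec_zero_iff u).mp hzero
  rwa [sub_mulVec, smul_mulVec, one_mulVec, sub_eq_zero, eq_comm] at this

theorem IsCyclo.neg {n : ℕ} {A : Matrix (Fin n) (Fin n) ℤ} (hA : IsCyclo A) : IsCyclo (-A) := by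
  intro μ hμ
  rw [Matrix.map_neg _ Int.cast_neg, ← spectrum.neg_eq, Set.mem_neg] at hμ
  simpa using hA _ hμ

theorem IsCyclo.unit_smul {n : ℕ} {A : Matrix (Fin n) (Fin n) ℤ} (hA : IsCyclo A) {s : ℤ}
    (hs : IsUnit s) : IsCyclo (s • A) := by
  rcases Int.isUnit_iff.mp hs with rfl | rfl
  · simpa using hA
  · simpa using hA.neg

theorem IsCyclo.mulVec_eq_two_smul {n : ℕ} {A : Matrix (Fin n) (Fin n) ℤ} (hA : IsCyclo A)
    (hsymm : A.IsSymm) {u : Fin n → ℤ} (hu : u ⬝ᵥ A *ᵥ u = 2 * (u ⬝ᵥ u)) :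
    A *ᵥ u = 2 • u := by
  set f := Int.castRingHom ℝ
  have hcast : A.map f *ᵥ (f ∘ u) = f ∘ (A *ᵥ u) :=
    funext fun i => (RingHom.map_mulVec f A u i).symm
  have hR := (isHermitian_iff_isSymm.mpr (hsymm.map f)).mulVec_eq_smul_of_dotProduct_mulVec_eq
    (fun μ hμ => (abs_le.mp (hA μ hμ)).2) (u := f ∘ u) (by
      rw [hcast, ← RingHom.map_dotProduct, ← RingHom.map_dotProduct, hu]
      simp)
  rw [hcast] at hR
  ext i
  have hi := congrFun hR i
  simp only [Function.comp_apply, Pi.smul_apply, smul_eq_mul, f, eq_intCast] at hi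
  simpa using (by exact_mod_cast hi : (A *ᵥ u) i = 2 * u i)

theorem Int.even_card_filter_ne_zero_of_sum_eq_zero {ι : Type*} {s : Finset ι} {f : ι → ℤ}
    (hf : ∀ y ∈ s, |f y| ≤ 1) (hsum : ∑ y ∈ s, f y = 0) : Even #(s.filter (f · ≠ 0)) := by
  rw [← Int.even_coe_nat, natCast_card_filter]
  have hdiff : Even (∑ y ∈ s, ((if f y ≠ 0 then 1 else 0) - f y)) :=
    even_sum _ fun y hy => by
      rcases abs_le.mp (hf y hy) with ⟨h₁, h₂⟩
      obtain h | h | h : f y = -1 ∨ f y = 0 ∨ f y = 1 := by omega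
      all_goals simp [h]
  simpa [sum_sub_distrib, hsum] using hdiff

theorem Matrix.mulVec_apply_eq_sum_of_support_subset {ι R : Type*} [Fintype ι]
    [NonUnitalNonAssocSemiring R] (A : Matrix ι ι R) {u : ι → R} (s : Finset ι)
    (hu : ∀ y ∉ s, u y = 0) (i : ι) : (A *ᵥ u) i = ∑ y ∈ s, A i y * u y :=
  (sum_subset (subset_univ s) fun y _ hy => by simp [hu y hy]).symm

section Triangle

variable {ι : Type*} [DecidableEq ι] (A : Matrix ι ι ℤ) (v w x : ι)

def triangleVector : ι → ℤ :=
  Pi.single v 1 + Pi.single w (A w x * A v x) + Pi.single x (A v w * A w x)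

variable {A v w x}

theorem triangleVector_apply_of_ne {z : ι} (hzv : z ≠ v) (hzw : z ≠ w) (hzx : z ≠ x) :
    triangleVector A v w x z = 0 := by
  simp [triangleVector, hzv, hzw, hzx]

theorem isUnit_triangleVector_apply (hvw : v ≠ w) (hvx : v ≠ x) (hwx : w ≠ x)
    (hab : IsUnit (A v w)) (hbc : IsUnit (A w x)) (hac : IsUnit (A v x)) {y : ι}
    (hy : y ∈ ({v, w, x} : Finset ι)) : IsUnit (triangleVector A v w x y) := by
  simp only [mem_insert, mem_singleton] at hy
  rcases hy with rfl | rfl | rfl <;>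
    simp [triangleVector, hvw, hvx, hwx, hvw.symm, hvx.symm, hwx.symm, hab, hbc, hac]

variable [Fintype ι]

theorem triangleVector_dotProduct_self (hvw : v ≠ w) (hvx : v ≠ x) (hwx : w ≠ x)
    (hab : IsUnit (A v w)) (hbc : IsUnit (A w x)) (hac : IsUnit (A v x)) :
    triangleVector A v w x ⬝ᵥ triangleVector A v w x = 3 := by
  have haa := Int.isUnit_mul_self hab
  have hbb := Int.isUnit_mul_self hbc
  have hcc := Int.isUnit_mul_self hac
  simp [triangleVector, dotProduct_add, hvw, hvx, hwx, hvw.symm, hvx.symm, hwx.symm]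
  linear_combination (A w x * A w x) * (haa + hcc) + 2 * hbb

theorem triangleVector_dotProduct_mulVec (hsymm : A.IsSymm) (hdiag : ∀ i, A i i = 0)
    (hbc : IsUnit (A w x)) :
    triangleVector A v w x ⬝ᵥ A *ᵥ triangleVector A v w x = 6 * (A v w * A w x * A v x) := by
  simp [triangleVector, mulVec_add, mulVec_single, add_dotProduct, dotProduct_add, single_dotProduct,
    hdiag, hsymm.apply v w, hsymm.apply v x, hsymm.apply w x]
  linear_combination (2 * A v w * A v x * A w x) * Int.isUnit_mul_self hbc

end Triangle

/-- In a cyclotomic signed graph, any vertex `z` outside a triangle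
`v, w, x` is adjacent to an even number of the triangle's vertices. -/
theorem triangle_even_attachment
    {n : ℕ} (A : Matrix (Fin n) (Fin n) ℤ) (hsymm : A.IsSymm)
    (hdiag : ∀ i, A i i = 0)
    (hent : ∀ i j, A i j = -1 ∨ A i j = 0 ∨ A i j = 1)
    (hcyc : IsCyclo A)
    (v w x z : Fin n)
    (hvw : v ≠ w) (hvx : v ≠ x) (hwx : w ≠ x)
    (hzv : z ≠ v) (hzw : z ≠ w) (hzx : z ≠ x)
    (hAvw : A v w ≠ 0) (hAwx : A w x ≠ 0) (hAvx : A v x ≠ 0) :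
    Even ((({v, w, x} : Finset (Fin n)).filter (fun y => A z y ≠ 0)).card) := by
  have isUnit_of_ne_zero {i j : Fin n} (h : A i j ≠ 0) : IsUnit (A i j) :=
    Int.isUnit_iff.mpr (by rcases hent i j with h' | h' | h' <;> simp_all)
  have hab := isUnit_of_ne_zero hAvw
  have hbc := isUnit_of_ne_zero hAwx
  have hac := isUnit_of_ne_zero hAvx
  set u := triangleVector A v w x
  set p := A v w * A w x * A v x
  have hp : IsUnit p := (hab.mul hbc).mul hac
  have heigen : (p • A) *ᵥ u = 2 • u := by
    refine (hcyc.unit_smul hp).mulVec_eq_two_smul (hsymm.smul p) ?_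
    rw [smul_mulVec, dotProduct_smul, triangleVector_dotProduct_mulVec hsymm hdiag hbc,
      triangleVector_dotProduct_self hvw hvx hwx hab hbc hac, smul_eq_mul]
    linear_combination 6 * Int.isUnit_mul_self hp
  have hrow : ∑ y ∈ {v, w, x}, A z y * u y = 0 := by
    have huz : u z = 0 := triangleVector_apply_of_ne hzv hzw hzx
    have hz := congrFun heigen z
    rw [smul_mulVec, Pi.smul_apply, Pi.smul_apply, huz, smul_zero, smul_eq_mul] at hz
    rw [← A.mulVec_apply_eq_sum_of_support_subset _ fun y hy => ?_]
    · exact (mul_eq_zero.mp hz).resolve_left hp.ne_zero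
    · simp only [mem_insert, mem_singleton, not_or] at hy
      exact triangleVector_apply_of_ne hy.1 hy.2.1 hy.2.2
  have hunit {y} (hy : y ∈ ({v, w, x} : Finset (Fin n))) : IsUnit (u y) :=
    isUnit_triangleVector_apply hvw hvx hwx hab hbc hac hy
  rw [filter_congr fun y hy => (hunit hy).mul_left_eq_zero.not.symm]
  refine Int.even_card_filter_ne_zero_of_sum_eq_zero (fun y hy => ?_) hrow
  rw [abs_mul, Int.isUnit_iff_abs_eq.mp (hunit hy), mul_one, abs_le]
  rcases hent z y with h | h | h <;> simp [h]
end

section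
/- Let A be a cyclotomic signed graph containing two triangles that share an edge: distinct vertices v, w, x, z with A v w, A v x, A w x, A v z, A w z all nonzero and x ≠ z. Then one triangle has an even number of negative edges and the other has an odd number of negative edges; equivalently, A v x · A w x · A v z · A w z = −1. -/
/-!
If the product were `1`, put `s = A v x * A w x` and test `A` on `u = e_v + s e_w`. Then
`(A u)_x = 2 A v x` and `(A u)_z = 2 A v z`, while `(A u)_v` and `(A u)_w` are `±1`, so
`‖A u‖² ≥ 10 > 8 = 4 ‖u‖²`. This contradicts `‖A‖ ≤ 2`, which holds because for a symmetric
matrix the operator norm is the spectral radius.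
-/

open Matrix

open scoped NNReal

theorem ContinuousLinearMap.nnnorm_le_of_spectrum_le {𝕜 E : Type*} [RCLike 𝕜]
    [NormedAddCommGroup E] [InnerProductSpace 𝕜 E] [CompleteSpace E] {T : E →L[𝕜] E}
    (hT : IsSelfAdjoint T) {r : ℝ≥0} (h : ∀ μ ∈ spectrum 𝕜 T, ‖μ‖₊ ≤ r) : ‖T‖₊ ≤ r := by
  rw [← ENNReal.coe_le_coe, ← T.spectralRadius_eq_nnnorm hT]
  exact iSup₂_le fun μ hμ => ENNReal.coe_le_coe.mpr (h μ hμ)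

theorem Matrix.IsHermitian.norm_mulVec_le_of_spectrum_le {𝕜 n : Type*} [RCLike 𝕜] [Fintype n]
    [DecidableEq n] {M : Matrix n n 𝕜} (hM : M.IsHermitian) {r : ℝ≥0}
    (h : ∀ μ ∈ spectrum 𝕜 M, ‖μ‖₊ ≤ r) (x : EuclideanSpace 𝕜 n) :
    ‖toEuclideanCLM (n := n) (𝕜 := 𝕜) M x‖ ≤ r * ‖x‖ := by
  have hT : ‖toEuclideanCLM (n := n) (𝕜 := 𝕜) M‖₊ ≤ r :=
    ContinuousLinearMap.nnnorm_le_of_spectrum_le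
      (hM.isSelfAdjoint.map toEuclideanCLM)
      (by rwa [AlgEquiv.spectrum_eq])
  exact (ContinuousLinearMap.le_opNorm _ x).trans (by gcongr; exact_mod_cast hT)

theorem EuclideanSpace.norm_sq_toLp_intCast {n : Type*} [Fintype n] (x : n → ℤ) :
    ‖(WithLp.toLp 2 (Int.cast ∘ x) : EuclideanSpace ℝ n)‖ ^ 2 = ((x ⬝ᵥ x : ℤ) : ℝ) := by
  rw [EuclideanSpace.norm_sq_eq]
  simp [dotProduct, sq]

theorem IsCyclo.mulVec_dotProduct_self_le {n : ℕ} {A : Matrix (Fin n) (Fin n) ℤ}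
    (hsymm : A.IsSymm) (hcyc : IsCyclo A) (x : Fin n → ℤ) :
    (A *ᵥ x) ⬝ᵥ (A *ᵥ x) ≤ 4 * (x ⬝ᵥ x) := by
  set M := A.map ((↑) : ℤ → ℝ)
  have hM : M.IsHermitian := isHermitian_iff_isSymm.mpr (hsymm.map _)
  have hbound := hM.norm_mulVec_le_of_spectrum_le (r := 2)
    (fun μ hμ => by simpa [← NNReal.coe_le_coe] using hcyc μ hμ) (WithLp.toLp 2 (Int.cast ∘ x))
  have hcast : M *ᵥ (Int.cast ∘ x) = Int.cast ∘ (A *ᵥ x) :=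
    funext fun i => (RingHom.map_mulVec (Int.castRingHom ℝ) A x i).symm
  rw [toEuclideanCLM_toLp, hcast] at hbound
  have hsq := pow_le_pow_left₀ (norm_nonneg _) hbound 2
  rw [mul_pow, EuclideanSpace.norm_sq_toLp_intCast, EuclideanSpace.norm_sq_toLp_intCast] at hsq
  norm_num at hsq
  exact_mod_cast hsq

theorem IsCyclo.edge_sign_product_ne_one {n : ℕ} {A : Matrix (Fin n) (Fin n) ℤ}
    (hsymm : A.IsSymm) (hdiag : ∀ i, A i i = 0) (hcyc : IsCyclo A) {v w x z : Fin n}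
    (hvw : v ≠ w) (hvx : v ≠ x) (hwx : w ≠ x) (hvz : v ≠ z) (hwz : w ≠ z) (hxz : x ≠ z)
    (hAvw : A v w ^ 2 = 1) (hAvx : A v x ^ 2 = 1) (hAwx : A w x ^ 2 = 1) (hAvz : A v z ^ 2 = 1) :
    A v x * A w x * A v z * A w z ≠ 1 := by
  intro hP
  set s := A v x * A w x
  have hs : s ^ 2 = 1 := by rw [mul_pow, hAvx, hAwx, one_mul]
  set u : Fin n → ℤ := Pi.single v 1 + Pi.single w s
  have huu : u ⬝ᵥ u = 2 := by
    simp [u, dotProduct_add, hvw, hvw.symm, ← sq, hs]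
  have hAu : ∀ j, (A *ᵥ u) j = A j v + s * A j w := by
    simp [u, mulVec_add, mul_comm]
  have hv : (A *ᵥ u) v = s * A v w := by rw [hAu, hdiag, zero_add]
  have hw : (A *ᵥ u) w = A v w := by rw [hAu, hdiag, mul_zero, add_zero, hsymm.apply]
  have hx : (A *ᵥ u) x = 2 * A v x := by
    rw [hAu, hsymm.apply v x, hsymm.apply w x]; linear_combination A v x * hAwx
  have hz : (A *ᵥ u) z = 2 * A v z := by
    rw [hAu, hsymm.apply v z, hsymm.apply w z]; linear_combination A v z * hP - s * A w z * hAvz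
  have hlower : 10 ≤ (A *ᵥ u) ⬝ᵥ (A *ᵥ u) := calc
    (10 : ℤ) = ∑ j ∈ {v, w, x, z}, (A *ᵥ u) j ^ 2 := by
      simp [hvw, hvx, hvz, hwx, hwz, hxz, hv, hw, hx, hz, mul_pow, hs, hAvw, hAvx, hAvz]
    _ ≤ (A *ᵥ u) ⬝ᵥ (A *ᵥ u) := by
      simpa [dotProduct, sq] using Finset.sum_le_univ_sum_of_nonneg fun j => sq_nonneg _
  linarith [hcyc.mulVec_dotProduct_self_le hsymm u]

/-- In a cyclotomic signed graph, if two triangles `v w x` and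
`v w z` share the edge `{v,w}`, then one triangle has an even and the other an odd
number of negative edges; equivalently the product of the four non-shared edge
signs is `-1`. -/
theorem shared_edge_triangles_opposite_parity
    {n : ℕ} (A : Matrix (Fin n) (Fin n) ℤ) (hsymm : A.IsSymm)
    (hdiag : ∀ i, A i i = 0)
    (hent : ∀ i j, A i j = -1 ∨ A i j = 0 ∨ A i j = 1)
    (hcyc : IsCyclo A)
    (v w x z : Fin n)
    (hvw : v ≠ w) (hvx : v ≠ x) (hwx : w ≠ x)
    (hvz : v ≠ z) (hwz : w ≠ z) (hxz : x ≠ z)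
    (hAvw : A v w ≠ 0) (hAvx : A v x ≠ 0) (hAwx : A w x ≠ 0)
    (hAvz : A v z ≠ 0) (hAwz : A w z ≠ 0) :
    A v x * A w x * A v z * A w z = -1 := by
  have entry_sq : ∀ {i j}, A i j ≠ 0 → A i j ^ 2 = 1 := fun {i j} h => by
    rcases hent i j with h' | h' | h' <;> simp_all
  have hprod_sq : (A v x * A w x * A v z * A w z) ^ 2 = 1 := by
    simp only [mul_pow, entry_sq hAvx, entry_sq hAwx, entry_sq hAvz, entry_sq hAwz, mul_one]
  exact (sq_eq_one_iff.mp hprod_sq).resolve_left <|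
    hcyc.edge_sign_product_ne_one hsymm hdiag hvw hvx hwx hvz hwz hxz
      (entry_sq hAvw) (entry_sq hAvx) (entry_sq hAwx) (entry_sq hAvz)
end

section
/- Let A be a cyclotomic signed graph. Then no three triangles of A share a single edge: there do not exist five distinct vertices v, w, x, y, z with A v w ≠ 0 and with each of x, y, z adjacent to both v and w (i.e. A v x, A w x, A v y, A w y, A v z, A w z all nonzero). -/
open Matrix

/-!
A cyclotomic matrix `A` satisfies `‖A u‖² ≤ 4 ‖u‖²`, because `4 - A²` is positive semidefinite
by the functional calculus. Of the three triangles on the edge `vw`, two, say `vwx` and `vwy`, have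
the same product `ε = A x v * A x w = A y v * A y w ∈ {±1}`. For `u = e_v + ε e_w` the coordinates
of `A u` at `x` and `y` are `±2` and those at `v` and `w` are `±1`, so `‖A u‖² ≥ 10 > 8 = 4 ‖u‖²`.
-/

open scoped MatrixOrder

theorem Matrix.IsHermitian.mulVec_dotProduct_mulVec_le {n : Type*} [Fintype n] [DecidableEq n]
    {B : Matrix n n ℝ} (hB : B.IsHermitian) {r : ℝ} (hr : ∀ μ ∈ spectrum ℝ B, |μ| ≤ r)
    (u : n → ℝ) : (B *ᵥ u) ⬝ᵥ (B *ᵥ u) ≤ r ^ 2 * (u ⬝ᵥ u) := by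
  have hpsd : (r ^ 2 • (1 : Matrix n n ℝ) - B * B).PosSemidef := by
    rw [← nonneg_iff_posSemidef]
    have hcfc : cfc (fun x : ℝ => r ^ 2 - x * x) B = r ^ 2 • 1 - B * B := by
      rw [cfc_sub _ _ B, cfc_const _ B, cfc_mul _ _ B, cfc_id' ℝ B, Algebra.algebraMap_eq_smul_one]
    rw [← hcfc]
    refine cfc_nonneg fun μ hμ => ?_
    nlinarith [abs_le.mp (hr μ hμ), abs_nonneg μ]
  have := hpsd.dotProduct_mulVec_nonneg u
  rw [star_trivial, sub_mulVec, dotProduct_sub, smul_mulVec, one_mulVec, dotProduct_smul,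
    ← mulVec_mulVec, dotProduct_mulVec, ← mulVec_transpose] at this
  rwa [← conjTranspose_eq_transpose_of_trivial, hB, smul_eq_mul, sub_nonneg] at this

theorem IsCyclo.mulVec_dotProduct_mulVec_le {n : ℕ} {A : Matrix (Fin n) (Fin n) ℤ}
    (hcyc : IsCyclo A) (hsymm : A.IsSymm) (u : Fin n → ℤ) :
    (A *ᵥ u) ⬝ᵥ (A *ᵥ u) ≤ 4 * (u ⬝ᵥ u) := by
  have hB : (A.map ((↑) : ℤ → ℝ)).IsHermitian := isHermitian_iff_isSymm.mpr (hsymm.map _)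
  have h := hB.mulVec_dotProduct_mulVec_le hcyc (Int.castRingHom ℝ ∘ u)
  have hmul : A.map (↑) *ᵥ (Int.castRingHom ℝ ∘ u) = Int.castRingHom ℝ ∘ (A *ᵥ u) :=
    funext fun i => ((Int.castRingHom ℝ).map_mulVec A u i).symm
  rw [hmul, ← RingHom.map_dotProduct, ← RingHom.map_dotProduct] at h
  norm_num [Int.coe_castRingHom] at h
  exact_mod_cast h

theorem IsCyclo.sign_ne_of_triangles_share_edge {n : ℕ} {A : Matrix (Fin n) (Fin n) ℤ}
    (hcyc : IsCyclo A) (hsymm : A.IsSymm) (hdiag : ∀ i, A i i = 0) {v w : Fin n}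
    (hvw : v ≠ w) (hAvw : IsUnit (A v w)) ⦃x y : Fin n⦄
    (hvx : v ≠ x) (hvy : v ≠ y) (hwx : w ≠ x) (hwy : w ≠ y) (hxy : x ≠ y)
    (hAxv : IsUnit (A x v)) (hAxw : IsUnit (A x w))
    (hAyv : IsUnit (A y v)) (hAyw : IsUnit (A y w)) :
    A x v * A x w ≠ A y v * A y w := by
  intro hsign
  set ε := A x v * A x w
  have hε : ε * ε = 1 := Int.isUnit_mul_self (hAxv.mul hAxw)
  set u : Fin n → ℤ := Pi.single v 1 + Pi.single w ε
  have hu : u ⬝ᵥ u = 2 := by simp [u, dotProduct_add, hvw, hvw.symm, hε]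
  have hAu (i : Fin n) : (A *ᵥ u) i = A i v + ε * A i w := by
    simp [u, mulVec_add, mulVec_single]
  have hlow : 10 ≤ (A *ᵥ u) ⬝ᵥ (A *ᵥ u) := by
    have hv : (A *ᵥ u) v = ε * A v w := by rw [hAu, hdiag, zero_add]
    have hw : (A *ᵥ u) w = A v w := by rw [hAu, hdiag, mul_zero, add_zero, hsymm.apply]
    have hx : (A *ᵥ u) x = 2 * A x v := by
      rw [hAu]; linear_combination A x v * Int.isUnit_mul_self hAxw
    have hy : (A *ᵥ u) y = 2 * A y v := by
      rw [hAu]; linear_combination A y w * hsign + A y v * Int.isUnit_mul_self hAyw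
    calc (10 : ℤ)
        = ∑ i ∈ {v, w, x, y}, (A *ᵥ u) i * (A *ᵥ u) i := by
          rw [Finset.sum_insert (by simp [hvw, hvx, hvy]), Finset.sum_insert (by simp [hwx, hwy]),
            Finset.sum_pair hxy, hv, hw, hx, hy]
          linear_combination (-(A v w * A v w)) * hε - 2 * Int.isUnit_mul_self hAvw
            - 4 * Int.isUnit_mul_self hAxv - 4 * Int.isUnit_mul_self hAyv
      _ ≤ (A *ᵥ u) ⬝ᵥ (A *ᵥ u) := Finset.sum_le_univ_sum_of_nonneg fun i => mul_self_nonneg _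
  have hup := hcyc.mulVec_dotProduct_mulVec_le hsymm u
  omega

/-- In a cyclotomic signed graph, no three triangles share a
single edge. -/
theorem no_three_triangles_share_an_edge
    {n : ℕ} (A : Matrix (Fin n) (Fin n) ℤ) (hsymm : A.IsSymm)
    (hdiag : ∀ i, A i i = 0)
    (hent : ∀ i j, A i j = -1 ∨ A i j = 0 ∨ A i j = 1)
    (hcyc : IsCyclo A) :
    ¬ ∃ v w x y z : Fin n,
        v ≠ w ∧ v ≠ x ∧ v ≠ y ∧ v ≠ z ∧ w ≠ x ∧ w ≠ y ∧ w ≠ z ∧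
        x ≠ y ∧ x ≠ z ∧ y ≠ z ∧
        A v w ≠ 0 ∧
        A v x ≠ 0 ∧ A w x ≠ 0 ∧
        A v y ≠ 0 ∧ A w y ≠ 0 ∧
        A v z ≠ 0 ∧ A w z ≠ 0 := by
  rintro ⟨v, w, x, y, z, hvw, hvx, hvy, hvz, hwx, hwy, hwz, hxy, hxz, hyz,
    hAvw, hAxv, hAxw, hAyv, hAyw, hAzv, hAzw⟩
  simp only [← hsymm.apply v, ← hsymm.apply w] at hAxv hAxw hAyv hAyw hAzv hAzw
  have hunit {i j : Fin n} (h : A i j ≠ 0) : IsUnit (A i j) :=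
    Int.isUnit_iff.mpr (by have := hent i j; omega)
  have hprod {i : Fin n} (hv : A i v ≠ 0) (hw : A i w ≠ 0) :
      A i v * A i w = 1 ∨ A i v * A i w = -1 :=
    Int.isUnit_iff.mp ((hunit hv).mul (hunit hw))
  have hne := hcyc.sign_ne_of_triangles_share_edge hsymm hdiag hvw (hunit hAvw)
  have hxy' := hne hvx hvy hwx hwy hxy (hunit hAxv) (hunit hAxw) (hunit hAyv) (hunit hAyw)
  have hxz' := hne hvx hvz hwx hwz hxz (hunit hAxv) (hunit hAxw) (hunit hAzv) (hunit hAzw)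
  have hyz' := hne hvy hvz hwy hwz hyz (hunit hAyv) (hunit hAyw) (hunit hAzv) (hunit hAzw)
  have hx := hprod hAxv hAxw
  have hy := hprod hAyv hAyw
  have hz := hprod hAzv hAzw
  omega
end

section
/- Let A be a cyclotomic signed graph. Then every vertex of A has degree at most 4: for each index v, the number of indices w ≠ v with A v w ≠ 0 is at most 4. -/
open Matrix

/-!
For a signed graph `A` the diagonal entry `(A²)ᵥᵥ = ∑_w A_{vw}²` is the degree of `v`. If the
spectrum of `A` lies in `[-2, 2]`, then `4 - A²` is positive semidefinite by the functional
calculus, so its diagonal entries are nonnegative and the degree is at most `4`.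
-/

open Finset
open scoped MatrixOrder

theorem Matrix.IsHermitian.sq_apply_self_le {ι : Type*} [Fintype ι] [DecidableEq ι]
    {B : Matrix ι ι ℝ} (hB : B.IsHermitian) {r : ℝ} (hr : ∀ μ ∈ spectrum ℝ B, |μ| ≤ r)
    (i : ι) : (B ^ 2) i i ≤ r ^ 2 := by
  have hle : B ^ 2 ≤ algebraMap ℝ (Matrix ι ι ℝ) (r ^ 2) := by
    rw [← cfc_pow_id (R := ℝ) B 2 hB]
    exact (cfc_le_algebraMap_iff _ _ B).2 fun μ hμ =>
      sq_le_sq' (abs_le.1 (hr μ hμ)).1 (abs_le.1 (hr μ hμ)).2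
  simpa [algebraMap_eq_diagonal, sub_nonneg] using (Matrix.le_iff.1 hle).diag_nonneg (i := i)

theorem Matrix.IsSymm.sq_apply_self_eq_card_ne_zero {ι : Type*} [Fintype ι] [DecidableEq ι]
    {A : Matrix ι ι ℤ} (hA : A.IsSymm) (hent : ∀ i j, A i j = -1 ∨ A i j = 0 ∨ A i j = 1)
    (v : ι) : (A ^ 2) v v = #{w | A v w ≠ 0} := by
  rw [sq, mul_apply, card_eq_sum_ones, Nat.cast_sum, sum_filter]
  refine sum_congr rfl fun w _ => ?_
  rw [hA.apply v w]
  rcases hent v w with h | h | h <;> simp [h]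

/-- In a cyclotomic signed graph every vertex has degree at most 4. -/
theorem cyclotomic_signed_graph_degree_le_four
    {n : ℕ} (A : Matrix (Fin n) (Fin n) ℤ) (hsymm : A.IsSymm)
    (hdiag : ∀ i, A i i = 0)
    (hent : ∀ i j, A i j = -1 ∨ A i j = 0 ∨ A i j = 1)
    (hcyc : IsCyclo A)
    (v : Fin n) :
    (Finset.univ.filter (fun w => w ≠ v ∧ A v w ≠ 0)).card ≤ 4 := by
  have hB : (A.map ((↑) : ℤ → ℝ)).IsHermitian := isHermitian_iff_isSymm.2 (hsymm.map _)
  have hcast : A.map ((↑) : ℤ → ℝ) ^ 2 = (A ^ 2).map (↑) :=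
    (map_pow (Int.castRingHom ℝ).mapMatrix A 2).symm
  have hsq : ((A ^ 2) v v : ℝ) ≤ 2 ^ 2 := by
    simpa only [hcast, map_apply] using hB.sq_apply_self_le hcyc v
  rw [hsymm.sq_apply_self_eq_card_ne_zero hent] at hsq
  have hloop : ∀ w, A v w ≠ 0 → w ≠ v := fun w hw hwv => hw (hwv ▸ hdiag v)
  rw [filter_congr fun w _ => and_iff_right_of_imp (hloop w)]
  norm_num at hsq
  exact_mod_cast hsq
end

section
/- Let n ≥ 2 and let S be a maximal triangle-free subgraph of 𝒟_n. If v is a vertex of S, then its conjugate v* also belongs to S. -/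
/-- The `i`th standard basis vector of `ℤⁿ`. -/
def stdVec (n : ℕ) (i : Fin n) : Fin n → ℤ := Pi.single i 1

/-- Integer dot product. -/
def dotZ {n : ℕ} (u v : Fin n → ℤ) : ℤ := ∑ k, u k * v k

/-- Vertices of the signed graph `𝒟_n`: vectors `e_i ± e_j` for `i < j`. -/
def DnVertex {n : ℕ} (v : Fin n → ℤ) : Prop :=
  ∃ i j : Fin n, i < j ∧
    (v = stdVec n i + stdVec n j ∨ v = stdVec n i - stdVec n j)

/-- Adjacency in `𝒟_n`: distinct vectors with nonzero inner product. -/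
def DnAdj {n : ℕ} (u v : Fin n → ℤ) : Prop := u ≠ v ∧ dotZ u v ≠ 0

/-- A set of vertices is triangle-free if it contains no three pairwise adjacent vertices. -/
def TriangleFree {n : ℕ} (S : Set (Fin n → ℤ)) : Prop :=
  ¬ ∃ a b c, a ∈ S ∧ b ∈ S ∧ c ∈ S ∧ DnAdj a b ∧ DnAdj a c ∧ DnAdj b c

/-- `S` is a maximal triangle-free subgraph of `𝒟_n`: a triangle-free set of vertices of
`𝒟_n` such that adjoining any further vertex of `𝒟_n` creates a triangle. -/
def MaximalTriangleFree {n : ℕ} (S : Set (Fin n → ℤ)) : Prop :=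
  (∀ v ∈ S, DnVertex v) ∧ TriangleFree S ∧
    ∀ v, DnVertex v → v ∉ S → ¬ TriangleFree (insert v S)

/-!
Write `w = e_i - e_j` and `u = e_i + e_j`. A vertex `a` adjacent to `w` has `a_i - a_j ≠ 0`;
if moreover `a_i + a_j = 0`, then `a` is nonzero at both `i` and `j`, which forces `a = w`.
So every neighbour of `w` is a neighbour of `u`, and symmetrically. In a maximal triangle-free
set `S` containing `u`, any triangle created by adjoining `w` would therefore give a triangle
through `u` inside `S`; hence `w ∈ S`.
-/

lemma dotZ_comm {n : ℕ} (u v : Fin n → ℤ) : dotZ u v = dotZ v u := by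
  simp only [dotZ, mul_comm]

lemma dotZ_stdVec_add {n : ℕ} (i j : Fin n) (a : Fin n → ℤ) :
    dotZ (stdVec n i + stdVec n j) a = a i + a j := by
  simp [dotZ, stdVec, Pi.single_apply, add_mul, Finset.sum_add_distrib]

lemma dotZ_stdVec_sub {n : ℕ} (i j : Fin n) (a : Fin n → ℤ) :
    dotZ (stdVec n i - stdVec n j) a = a i - a j := by
  simp [dotZ, stdVec, Pi.single_apply, sub_mul, Finset.sum_sub_distrib]

lemma DnAdj.symm {n : ℕ} {u v : Fin n → ℤ} (h : DnAdj u v) : DnAdj v u :=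
  ⟨h.1.symm, by rw [dotZ_comm]; exact h.2⟩

lemma DnVertex.eq_of_apply_ne_zero {n : ℕ} {a : Fin n → ℤ} (ha : DnVertex a) {i j : Fin n}
    (hij : i < j) (hi : a i ≠ 0) (hj : a j ≠ 0) :
    a = stdVec n i + stdVec n j ∨ a = stdVec n i - stdVec n j := by
  obtain ⟨k, l, hkl, rfl | rfl⟩ := ha <;>
  · simp only [stdVec, Pi.add_apply, Pi.sub_apply, Pi.single_apply] at hi hj
    have hk : i = k := by split_ifs at hi hj <;> first | assumption | omega
    have hl : j = l := by split_ifs at hi hj <;> first | assumption | omega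
    subst hk hl
    simp

lemma DnVertex.eq_stdVec_sub {n : ℕ} {a : Fin n → ℤ} (ha : DnVertex a) {i j : Fin n}
    (hij : i < j) (hadd : a i + a j = 0) (hsub : a i - a j ≠ 0) :
    a = stdVec n i - stdVec n j := by
  rcases ha.eq_of_apply_ne_zero hij (by omega) (by omega) with rfl | rfl
  · simp [stdVec, hij.ne'] at hsub
  · rfl

lemma DnVertex.eq_stdVec_add {n : ℕ} {a : Fin n → ℤ} (ha : DnVertex a) {i j : Fin n}
    (hij : i < j) (hadd : a i + a j ≠ 0) (hsub : a i - a j = 0) :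
    a = stdVec n i + stdVec n j := by
  rcases ha.eq_of_apply_ne_zero hij (by omega) (by omega) with rfl | rfl
  · rfl
  · simp [stdVec, hij.ne'] at hadd

lemma dnAdj_stdVec_add_of_dnAdj_sub {n : ℕ} {i j : Fin n} (hij : i < j) {a : Fin n → ℤ}
    (ha : DnVertex a) (h : DnAdj (stdVec n i - stdVec n j) a) :
    DnAdj (stdVec n i + stdVec n j) a := by
  rw [DnAdj, dotZ_stdVec_sub] at h
  rw [DnAdj, dotZ_stdVec_add]
  refine ⟨?_, fun hadd => h.1 (ha.eq_stdVec_sub hij hadd h.2).symm⟩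
  rintro rfl
  simp [stdVec, hij.ne'] at h

lemma dnAdj_stdVec_sub_of_dnAdj_add {n : ℕ} {i j : Fin n} (hij : i < j) {a : Fin n → ℤ}
    (ha : DnVertex a) (h : DnAdj (stdVec n i + stdVec n j) a) :
    DnAdj (stdVec n i - stdVec n j) a := by
  rw [DnAdj, dotZ_stdVec_add] at h
  rw [DnAdj, dotZ_stdVec_sub]
  refine ⟨?_, fun hsub => h.1 (ha.eq_stdVec_add hij h.2 hsub).symm⟩
  rintro rfl
  simp [stdVec, hij.ne'] at h

lemma TriangleFree.exists_of_not_insert {n : ℕ} {S : Set (Fin n → ℤ)} (hS : TriangleFree S)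
    {w : Fin n → ℤ} (hw : ¬ TriangleFree (insert w S)) :
    ∃ x ∈ S, ∃ y ∈ S, DnAdj w x ∧ DnAdj w y ∧ DnAdj x y := by
  rw [TriangleFree, not_not] at hw
  obtain ⟨a, b, c, ha, hb, hc, hab, hac, hbc⟩ := hw
  have mem_of_adj {x y : Fin n → ℤ} (hx : x ∈ insert w S) (hy : y = w) (h : DnAdj x y) :
      x ∈ S := hx.resolve_left (by rintro rfl; exact h.1 hy.symm)
  rcases ha with rfl | ha
  · exact ⟨b, mem_of_adj hb rfl hab.symm, c, mem_of_adj hc rfl hac.symm, hab, hac, hbc⟩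
  rcases hb with rfl | hb
  · exact ⟨a, ha, c, mem_of_adj hc rfl hbc.symm, hab.symm, hbc, hac⟩
  rcases hc with rfl | hc
  · exact ⟨a, ha, b, hb, hac.symm, hbc.symm, hab⟩
  · exact absurd ⟨a, b, c, ha, hb, hc, hab, hac, hbc⟩ hS

lemma MaximalTriangleFree.mem_of_forall_dnAdj_imp {n : ℕ} {S : Set (Fin n → ℤ)}
    (hS : MaximalTriangleFree S) {u w : Fin n → ℤ} (hu : u ∈ S) (hw : DnVertex w)
    (h : ∀ a ∈ S, DnAdj w a → DnAdj u a) : w ∈ S := by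
  by_contra hwS
  obtain ⟨x, hx, y, hy, hwx, hwy, hxy⟩ := hS.2.1.exists_of_not_insert (hS.2.2 w hw hwS)
  exact hS.2.1 ⟨u, x, y, hu, hx, hy, h x hx hwx, h y hy hwy, hxy⟩

theorem conjugate_mem_maximal_triangle_free_general
    {n : ℕ} (S : Set (Fin n → ℤ))
    (hS : MaximalTriangleFree S) :
    ∀ i j : Fin n, i < j →
      (stdVec n i + stdVec n j ∈ S ↔ stdVec n i - stdVec n j ∈ S) := by
  intro i j hij
  constructor
  · intro hu
    exact hS.mem_of_forall_dnAdj_imp hu ⟨i, j, hij, Or.inr rfl⟩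
      fun a ha => dnAdj_stdVec_add_of_dnAdj_sub hij (hS.1 a ha)
  · intro hu
    exact hS.mem_of_forall_dnAdj_imp hu ⟨i, j, hij, Or.inl rfl⟩
      fun a ha => dnAdj_stdVec_sub_of_dnAdj_add hij (hS.1 a ha)

/-- In a maximal triangle-free subgraph of `𝒟_n`, the conjugate of
every vertex is also in the subgraph: `e_i + e_j ∈ S ↔ e_i − e_j ∈ S`. -/
theorem conjugate_mem_maximal_triangle_free
    {n : ℕ} (hn : 2 ≤ n) (S : Set (Fin n → ℤ))
    (hS : MaximalTriangleFree S) :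
    ∀ i j : Fin n, i < j →
      (stdVec n i + stdVec n j ∈ S ↔ stdVec n i - stdVec n j ∈ S) :=
  conjugate_mem_maximal_triangle_free_general S hS
end

section
/- Let n ≥ 2 and let S be a maximal triangle-free subgraph of 𝒟_n. Then for each i ∈ {1,…,n}, the basis vector e_i is included in at most four vertices of S: the number of vertices v ∈ S with ⟨v, e_i⟩ ≠ 0 is at most 4. -/
/-!
A vertex of `𝒟_n` including `e_i` has the form `e_i ± e_j` or `e_j ± e_i` for a unique partner
index `j ≠ i`, and for each partner there are only two such vertices. Two vertices including
`e_i` with different partners have disjoint supports apart from `i`, so their inner product is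
`±1` and they are adjacent. Hence three vertices of `S` including `e_i` with pairwise distinct
partners would form a triangle: at most two partners occur, giving at most `2 * 2` vertices.
-/

/-- The vertices of `𝒟_n` supported on `{i, j}`; the smaller index comes first, as in `DnVertex`. -/
def pairVertices (n : ℕ) (i j : Fin n) : Set (Fin n → ℤ) :=
  if i < j then {stdVec n i + stdVec n j, stdVec n i - stdVec n j}
  else {stdVec n j + stdVec n i, stdVec n j - stdVec n i}

section

variable {n : ℕ}

lemma stdVec_apply (a m : Fin n) : stdVec n a m = if m = a then 1 else 0 := by
  simp [stdVec, Pi.single_apply]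

lemma dotZ_stdVec_right (v : Fin n → ℤ) (a : Fin n) : dotZ v (stdVec n a) = v a := by
  simp [dotZ, stdVec, Pi.single_apply, mul_ite]

lemma pairVertices_finite (i j : Fin n) : (pairVertices n i j).Finite := by
  unfold pairVertices
  split <;> exact (Set.finite_singleton _).insert _

lemma ncard_pairVertices_le (i j : Fin n) : (pairVertices n i j).ncard ≤ 2 := by
  unfold pairVertices
  split <;> exact (Set.ncard_insert_le _ _).trans (by simp)

lemma pairVertices_apply_ne_zero_iff {i j : Fin n} {u : Fin n → ℤ} (hu : u ∈ pairVertices n i j)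
    (hij : i ≠ j) (m : Fin n) : u m ≠ 0 ↔ m = i ∨ m = j := by
  unfold pairVertices at hu
  split at hu <;> rcases hu with rfl | rfl <;>
    by_cases hmi : m = i <;> by_cases hmj : m = j <;> simp_all [stdVec_apply]

lemma mem_pairVertices_of_apply_ne_zero {v : Fin n → ℤ} {i : Fin n} (hv : DnVertex v)
    (hvi : v i ≠ 0) : ∃ j, i ≠ j ∧ v ∈ pairVertices n i j := by
  obtain ⟨a, b, hab, hform⟩ := hv
  have hiab : i = a ∨ i = b := by
    by_contra! h
    rcases hform with rfl | rfl <;> simp [stdVec_apply, h.1, h.2] at hvi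
  rcases hiab with rfl | rfl
  · refine ⟨b, hab.ne, ?_⟩
    simp only [pairVertices, if_pos hab, Set.mem_insert_iff, Set.mem_singleton_iff]
    tauto
  · refine ⟨a, hab.ne', ?_⟩
    simp only [pairVertices, if_neg hab.not_gt, Set.mem_insert_iff, Set.mem_singleton_iff]
    tauto

lemma pairVertices_adj {i j k : Fin n} {u v : Fin n → ℤ} (hu : u ∈ pairVertices n i j)
    (hv : v ∈ pairVertices n i k) (hij : i ≠ j) (hik : i ≠ k) (hjk : j ≠ k) : DnAdj u v := by
  have hu' := pairVertices_apply_ne_zero_iff hu hij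
  have hv' := pairVertices_apply_ne_zero_iff hv hik
  refine ⟨fun huv => ?_, ?_⟩
  · have huj : u j ≠ 0 := (hu' j).2 (Or.inr rfl)
    rw [huv, hv' j] at huj
    tauto
  · have hdot : dotZ u v = u i * v i := by
      refine Finset.sum_eq_single i (fun m _ hmi => ?_) (by simp)
      by_contra! h
      obtain ⟨hum, hvm⟩ := mul_ne_zero_iff.1 h
      rw [hu' m] at hum
      rw [hv' m] at hvm
      exact hjk ((hum.resolve_left hmi).symm.trans (hvm.resolve_left hmi))
    rw [hdot]
    exact mul_ne_zero ((hu' i).2 (Or.inl rfl)) ((hv' i).2 (Or.inl rfl))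

lemma TriangleFree.exists_subset_pairVertices_union {S : Set (Fin n → ℤ)}
    (hV : ∀ v ∈ S, DnVertex v) (hS : TriangleFree S) (i : Fin n) :
    ∃ j k, {v ∈ S | v i ≠ 0} ⊆ pairVertices n i j ∪ pairVertices n i k := by
  by_contra! h
  have new_partner : ∀ j k, ∃ v ∈ S, ∃ l, i ≠ l ∧ l ≠ j ∧ l ≠ k ∧ v ∈ pairVertices n i l := by
    intro j k
    obtain ⟨v, ⟨hvS, hvi⟩, hv⟩ := Set.not_subset.1 (h j k)
    obtain ⟨l, hil, hl⟩ := mem_pairVertices_of_apply_ne_zero (hV v hvS) hvi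
    refine ⟨v, hvS, l, hil, ?_, ?_, hl⟩ <;> rintro rfl <;> simp_all
  obtain ⟨u, hu, j, hij, -, -, huj⟩ := new_partner i i
  obtain ⟨v, hv, k, hik, hkj, -, hvk⟩ := new_partner j j
  obtain ⟨w, hw, l, hil, hlj, hlk, hwl⟩ := new_partner j k
  exact hS ⟨u, v, w, hu, hv, hw, pairVertices_adj huj hvk hij hik hkj.symm,
    pairVertices_adj huj hwl hij hil hlj.symm, pairVertices_adj hvk hwl hik hil hlk.symm⟩

end

theorem basis_vector_included_at_most_four_times_general
    {n : ℕ} (S : Set (Fin n → ℤ))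
    (hS : MaximalTriangleFree S) (i : Fin n) :
    Set.ncard {v ∈ S | dotZ v (stdVec n i) ≠ 0} ≤ 4 := by
  obtain ⟨j, k, hsub⟩ := hS.2.1.exists_subset_pairVertices_union hS.1 i
  simp only [dotZ_stdVec_right]
  calc Set.ncard {v ∈ S | v i ≠ 0}
      ≤ (pairVertices n i j ∪ pairVertices n i k).ncard :=
        Set.ncard_le_ncard hsub ((pairVertices_finite i j).union (pairVertices_finite i k))
    _ ≤ (pairVertices n i j).ncard + (pairVertices n i k).ncard := Set.ncard_union_le _ _
    _ ≤ 4 := by linarith [ncard_pairVertices_le i j, ncard_pairVertices_le i k]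

/-- In a maximal triangle-free subgraph `S` of `𝒟_n`, each basis
vector `e_i` is included in at most four vertices of `S`. -/
theorem basis_vector_included_at_most_four_times
    {n : ℕ} (hn : 2 ≤ n) (S : Set (Fin n → ℤ))
    (hS : MaximalTriangleFree S) (i : Fin n) :
    Set.ncard {v ∈ S | dotZ v (stdVec n i) ≠ 0} ≤ 4 :=
  basis_vector_included_at_most_four_times_general S hS i
end

section
/- Let m ≥ 4 and let e_1,…,e_m be the standard orthonormal basis of ℝᵐ. Consider the 2m vectors w_1 = e_1+e_2, w_2 = e_2+e_3, …, w_{m−1} = e_{m−1}+e_m, w_m = e_1+e_m, w_{m+1} = e_1−e_2, …, w_{2m−1} = e_{m−1}−e_m, w_{2m} = e_1−e_m, and let A be the 2m×2m integer matrix with A s t = ⟨w_s, w_t⟩ for s ≠ t and A s s = 0 (so A + 2I is the Gram matrix of the w_s). Then A² = 4I, every eigenvalue of A is 2 or −2, and the characteristic polynomial of A is (X² − 4)ᵐ = (X−2)ᵐ (X+2)ᵐ. In particular this toral tesselation T_{2m} is a cyclotomic signed graph. -/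
open Polynomial

/-- The `2m` vectors of the toral tesselation `T_{2m}` (coordinates in `ℤᵐ`):
`w_s = e_s + e_{s+1}` for `0 ≤ s ≤ m−2`, `w_{m−1} = e_{m-1} + e_0`,
`w_{m+t} = e_t − e_{t+1}` for `0 ≤ t ≤ m−2`, and `w_{2m−1} = e_0 − e_{m−1}`. -/
def torW (m : ℕ) (s : Fin (2 * m)) : Fin m → ℤ := fun j =>
  if (s : ℕ) < m then
    (if (j : ℕ) = (s : ℕ) then 1 else 0) +
      (if (j : ℕ) = ((s : ℕ) + 1) % m then 1 else 0)
  else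
    if (s : ℕ) - m < m - 1 then
      (if (j : ℕ) = (s : ℕ) - m then 1 else 0) -
        (if (j : ℕ) = (s : ℕ) - m + 1 then 1 else 0)
    else
      (if (j : ℕ) = 0 then 1 else 0) - (if (j : ℕ) = m - 1 then 1 else 0)

/-- The adjacency matrix of `T_{2m}`: off-diagonal entries are the inner products
`⟨w_s, w_t⟩`, diagonal entries are `0` (so `A + 2I` is the Gram matrix of the `w_s`). -/
def torA (m : ℕ) : Matrix (Fin (2 * m)) (Fin (2 * m)) ℤ :=
  fun s t => if s = t then 0 else ∑ j, torW m s j * torW m t j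

/-!
Let `W` be the `2m × m` matrix with rows `w_s`. Pairing `w_u = a + b` with `w_{m+u} = ±(a - b)`,
where `a = e_u` and `b = e_{u+1}`, gives `w_u w_uᵀ + w_{m+u} w_{m+u}ᵀ = 2 (a aᵀ + b bᵀ)`, so
`Wᵀ W = 4 I`; and every `w_s` has squared norm `2`, so `A = W Wᵀ - 2 I`. Hence
`A² = W (Wᵀ W) Wᵀ - 4 W Wᵀ + 4 I = 4 I`, and since `W Wᵀ` and `Wᵀ W` have the same characteristic
polynomial up to a factor `X ^ m`, the characteristic polynomial of `A` is `(X - 2)ᵐ (X + 2)ᵐ`.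
The real eigenvalues of `A` are its roots.
-/

namespace Matrix

variable {m n R : Type*} [Fintype m] [Fintype n] [DecidableEq m] [DecidableEq n] [CommRing R]

theorem mul_transpose_sub_smul_one_mul_self {W : Matrix m n R} {a : R}
    (h : Wᵀ * W = (2 * a) • 1) :
    (W * Wᵀ - a • 1) * (W * Wᵀ - a • 1) = (a * a) • 1 := by
  have hsq : W * Wᵀ * (W * Wᵀ) = (2 * a) • (W * Wᵀ) := by
    rw [Matrix.mul_assoc, ← Matrix.mul_assoc Wᵀ, h, Matrix.smul_mul, Matrix.one_mul,
      Matrix.mul_smul]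
  rw [sub_mul, mul_sub, mul_sub, hsq]
  simp only [Matrix.smul_mul, Matrix.mul_smul, Matrix.one_mul, Matrix.mul_one, smul_smul]
  module

theorem charpoly_smul_one (c : R) :
    (c • 1 : Matrix n n R).charpoly = (X - C c) ^ Fintype.card n := by
  rw [smul_one_eq_diagonal, charpoly_diagonal, Finset.prod_const, Finset.card_univ]

theorem charpoly_mul_transpose_sub_smul_one {W : Matrix m n R} {a : R}
    (h : Wᵀ * W = (2 * a) • 1) (hle : Fintype.card n ≤ Fintype.card m) :
    (W * Wᵀ - a • 1).charpoly =
      (X - C a) ^ Fintype.card n * (X + C a) ^ (Fintype.card m - Fintype.card n) := by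
  rw [smul_one_eq_diagonal, ← scalar_apply, charpoly_sub_scalar, charpoly_mul_comm_of_le _ _ hle,
    h, charpoly_smul_one]
  simp only [mul_comp, pow_comp, X_comp, sub_comp, C_comp]
  rw [mul_comm, map_mul, C_ofNat]
  congr 2
  ring

theorem mem_spectrum_map_iff_isRoot_charpoly_map {K : Type*} [Field K] (f : R →+* K)
    (A : Matrix n n R) (μ : K) :
    μ ∈ spectrum K (A.map f) ↔ (A.charpoly.map f).IsRoot μ := by
  rw [mem_spectrum_iff_isRoot_charpoly, charpoly_map]

end Matrix

open Matrix

theorem Pi.sum_single_one_mul_single_one {n R : Type*} [Fintype n] [DecidableEq n] [Semiring R]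
    (j k : n) :
    ∑ u, (Pi.single u (1 : R) : n → R) j * (Pi.single u (1 : R) : n → R) k =
      (1 : Matrix n n R) j k := by
  simp [Pi.single_apply, Matrix.one_apply]

theorem Pi.single_add_single_dotProduct_self {n R : Type*} [Fintype n] [DecidableEq n]
    [Semiring R] {u v : n} (huv : u ≠ v) (a b : R) :
    (Pi.single u a + Pi.single v b) ⬝ᵥ (Pi.single u a + Pi.single v b) = a * a + b * b := by
  simp [dotProduct_add, huv, huv.symm]

theorem Fin.sum_univ_two_mul {M : Type*} [AddCommMonoid M] (m : ℕ) (f : Fin (2 * m) → M) :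
    ∑ s, f s = ∑ u : Fin m, (f ⟨u, by omega⟩ + f ⟨m + u, by omega⟩) := by
  rw [← (finCongr (two_mul m)).symm.sum_comp, Fin.sum_univ_add, ← Finset.sum_add_distrib]
  rfl

theorem Fin.eq_mk_or_eq_mk_add_of_two_mul {m : ℕ} (s : Fin (2 * m)) :
    (∃ u : Fin m, s = ⟨u, by omega⟩) ∨ ∃ u : Fin m, s = ⟨m + u, by omega⟩ := by
  by_cases hs : (s : ℕ) < m
  · exact .inl ⟨⟨s, hs⟩, rfl⟩
  · exact .inr ⟨⟨s - m, by omega⟩, Fin.ext (by simp only; omega)⟩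

theorem val_finRotate {n : ℕ} (i : Fin n) : (finRotate n i : ℕ) = (i + 1) % n := by
  have := i.neZero
  rw [finRotate_apply, Fin.val_add, Fin.val_one', Nat.add_mod_mod]

theorem finRotate_apply_ne {n : ℕ} (hn : 2 ≤ n) (i : Fin n) : finRotate n i ≠ i := by
  obtain ⟨k, rfl⟩ : ∃ k, n = k + 2 := ⟨n - 2, by omega⟩
  exact Equiv.Perm.mem_support.mp (by simp [support_finRotate])

section Torus

variable {m : ℕ}

theorem torW_mk (u : Fin m) :
    torW m ⟨u, by omega⟩ = Pi.single u 1 + Pi.single (finRotate m u) 1 := by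
  funext j
  simp [torW, Pi.single_apply, Fin.ext_iff, val_finRotate, -finRotate_apply]

theorem torW_mk_add (u : Fin m) :
    torW m ⟨m + u, by omega⟩ = Pi.single u 1 - Pi.single (finRotate m u) 1 ∨
      torW m ⟨m + u, by omega⟩ = -(Pi.single u 1 - Pi.single (finRotate m u) 1) := by
  by_cases hu : (u : ℕ) + 1 < m
  · left
    funext j
    simp [torW, Pi.single_apply, Fin.ext_iff, val_finRotate, -finRotate_apply, hu,
      Nat.mod_eq_of_lt hu]
  · right
    funext j
    simp [torW, Pi.single_apply, Fin.ext_iff, val_finRotate, -finRotate_apply,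
      show m - 1 = u by omega, show (u : ℕ) + 1 = m by omega]

theorem torW_dotProduct_self (hm : 2 ≤ m) (s : Fin (2 * m)) : torW m s ⬝ᵥ torW m s = 2 := by
  obtain ⟨u, rfl⟩ | ⟨u, rfl⟩ := s.eq_mk_or_eq_mk_add_of_two_mul
  · rw [torW_mk, Pi.single_add_single_dotProduct_self (finRotate_apply_ne hm u).symm]
    norm_num
  · have hdiff : (Pi.single u 1 - Pi.single (finRotate m u) 1 : Fin m → ℤ) ⬝ᵥ
        (Pi.single u 1 - Pi.single (finRotate m u) 1) = 2 := by
      rw [sub_eq_add_neg, ← Pi.single_neg,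
        Pi.single_add_single_dotProduct_self (finRotate_apply_ne hm u).symm]
      norm_num
    rcases torW_mk_add u with h | h <;> rw [h]
    · exact hdiff
    · rw [neg_dotProduct_neg, hdiff]

theorem transpose_torW_mul_torW :
    (of (torW m))ᵀ * of (torW m) = (2 * 2 : ℤ) • (1 : Matrix (Fin m) (Fin m) ℤ) := by
  ext j k
  let δ (u : Fin m) : Fin m → ℤ := Pi.single u 1
  have hpair (u : Fin m) :
      torW m ⟨u, by omega⟩ j * torW m ⟨u, by omega⟩ k +
        torW m ⟨m + u, by omega⟩ j * torW m ⟨m + u, by omega⟩ k =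
      2 * (δ u j * δ u k + δ (finRotate m u) j * δ (finRotate m u) k) := by
    rw [torW_mk]
    rcases torW_mk_add u with h | h <;> rw [h] <;>
      simp only [δ, Pi.add_apply, Pi.sub_apply, Pi.neg_apply] <;> ring
  simp only [mul_apply, transpose_apply, of_apply]
  rw [Fin.sum_univ_two_mul, Finset.sum_congr rfl fun u _ => hpair u, ← Finset.mul_sum,
    Finset.sum_add_distrib, Equiv.sum_comp (finRotate m) fun u => δ u j * δ u k,
    Pi.sum_single_one_mul_single_one, Matrix.smul_apply, smul_eq_mul]
  ring

theorem torA_eq_mul_transpose_sub (hm : 2 ≤ m) :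
    torA m = of (torW m) * (of (torW m))ᵀ - (2 : ℤ) • 1 := by
  ext s t
  by_cases h : s = t
  · subst h
    have := torW_dotProduct_self hm s
    simp_all [torA, mul_apply, dotProduct, ofNat_apply]
  · simp [torA, mul_apply, h, ofNat_apply]

end Torus

/-- For `m ≥ 4`, the toral tesselation `T_{2m}` satisfies `A² = 4I`,
all its eigenvalues are `±2`, its characteristic polynomial is `(X−2)ᵐ(X+2)ᵐ`,
and in particular it is a cyclotomic signed graph. -/
theorem toral_tesselation_cyclotomic (m : ℕ) (hm : 4 ≤ m) :
    torA m * torA m = (4 : ℤ) • (1 : Matrix (Fin (2 * m)) (Fin (2 * m)) ℤ) ∧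
    (∀ μ ∈ spectrum ℝ ((torA m).map ((↑) : ℤ → ℝ)), μ = 2 ∨ μ = -2) ∧
    (torA m).charpoly = (X - 2) ^ m * (X + 2) ^ m ∧
    IsCyclo (torA m) := by
  have hA := torA_eq_mul_transpose_sub (m := m) (by omega)
  have hW := transpose_torW_mul_torW (m := m)
  have hcharpoly : (torA m).charpoly = (X - 2) ^ m * (X + 2) ^ m := by
    rw [hA, charpoly_mul_transpose_sub_smul_one hW (by simp; omega)]
    simp [show 2 * m - m = m by omega]
  have hspec : ∀ μ ∈ spectrum ℝ ((torA m).map ((↑) : ℤ → ℝ)), μ = 2 ∨ μ = -2 := by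
    intro μ hμ
    have hroot := (mem_spectrum_map_iff_isRoot_charpoly_map (Int.castRingHom ℝ) _ μ).mp hμ
    rw [hcharpoly] at hroot
    simpa [sub_eq_zero, add_eq_zero_iff_eq_neg, show m ≠ 0 by omega] using hroot
  refine ⟨?_, hspec, hcharpoly, fun μ hμ => ?_⟩
  · rw [hA, mul_transpose_sub_smul_one_mul_self hW]
    norm_num
  · rcases hspec μ hμ with rfl | rfl <;> norm_num
end

section
/- Let A be a cyclotomic charged signed graph containing three distinct vertices v, w, x such that v and w are neutral (A v v = A w w = 0), v and w are not adjacent (A v w = 0), x is charged (A x x ≠ 0), and x is adjacent to both v and w (A v x ≠ 0 and A w x ≠ 0). Then v and w have the same neighbours: for every vertex y with y ≠ v and y ≠ w, A y v ≠ 0 if and only if A y w ≠ 0. -/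
/-
Cyclotomicity gives μ² ≤ 4 for every eigenvalue μ of `A`, so `4 - A²` is positive semidefinite
and `‖A z‖² ≤ 4 ‖z‖²` for every integer vector `z`. For
`z = A v x • e_v + A w x • e_w + 2 A x x • e_x` we have `‖z‖² = 6`, while the coordinates `v, w, x`
of `A z` alone contribute `4 + 4 + 16 = 24`. Hence `(A z) y = 0` for every other `y`, so
`A y v * A v x + A y w * A w x` is even, which forces `A y v` and `A y w` to vanish together.
-/

open Matrix

open scoped MatrixOrder

theorem IsSelfAdjoint.mul_self_le_algebraMap {𝒜 : Type*} [TopologicalSpace 𝒜] [Ring 𝒜]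
    [StarRing 𝒜] [PartialOrder 𝒜] [StarOrderedRing 𝒜] [Algebra ℝ 𝒜]
    [ContinuousFunctionalCalculus ℝ 𝒜 IsSelfAdjoint] {B : 𝒜} (hB : IsSelfAdjoint B) {r : ℝ}
    (h : ∀ μ ∈ spectrum ℝ B, |μ| ≤ r) : B * B ≤ algebraMap ℝ 𝒜 (r ^ 2) := by
  calc B * B = cfc (fun μ : ℝ => μ * μ) B := by rw [cfc_mul _ _ B, cfc_id' ℝ B]
    _ ≤ cfc (fun _ : ℝ => r ^ 2) B := cfc_mono fun μ hμ => by
        nlinarith [h μ hμ, abs_mul_abs_self μ, abs_nonneg μ]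
    _ = algebraMap ℝ _ (r ^ 2) := cfc_const _ B

namespace Matrix

variable {ι : Type*} [Fintype ι] [DecidableEq ι]

theorem IsHermitian.dotProduct_mulVec_self_le {B : Matrix ι ι ℝ} (hB : B.IsHermitian) {r : ℝ}
    (h : ∀ μ ∈ spectrum ℝ B, |μ| ≤ r) (z : ι → ℝ) :
    (B *ᵥ z) ⬝ᵥ (B *ᵥ z) ≤ r ^ 2 * (z ⬝ᵥ z) := by
  have hnonneg :=
    (le_iff.mp (hB.isSelfAdjoint.mul_self_le_algebraMap h)).dotProduct_mulVec_nonneg z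
  have hBt : Bᵀ = B := by rw [← conjTranspose_eq_transpose_of_trivial, hB.eq]
  have hsq : z ⬝ᵥ (B * B) *ᵥ z = (B *ᵥ z) ⬝ᵥ (B *ᵥ z) := by
    rw [← mulVec_mulVec, dotProduct_mulVec, ← mulVec_transpose, hBt]
  rw [star_trivial, sub_mulVec, dotProduct_sub, hsq, Algebra.algebraMap_eq_smul_one, smul_mulVec,
    one_mulVec, dotProduct_smul, smul_eq_mul] at hnonneg
  exact sub_nonneg.mp hnonneg

theorem eq_zero_of_dotProduct_self_le_sum {R : Type*} [CommRing R] [LinearOrder R]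
    [IsStrictOrderedRing R] {u : ι → R} {S : Finset ι} (h : u ⬝ᵥ u ≤ ∑ i ∈ S, u i * u i)
    {y : ι} (hy : y ∉ S) : u y = 0 := by
  have hle : ∑ i ∈ insert y S, u i * u i ≤ u ⬝ᵥ u :=
    Finset.sum_le_sum_of_subset_of_nonneg (Finset.subset_univ _) fun i _ _ => mul_self_nonneg (u i)
  rw [Finset.sum_insert hy] at hle
  exact mul_self_eq_zero.mp (le_antisymm (by linarith) (mul_self_nonneg (u y)))

end Matrix

theorem IsCyclo.dotProduct_mulVec_self_le {n : ℕ} {A : Matrix (Fin n) (Fin n) ℤ} (hcyc : IsCyclo A)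
    (hsymm : A.IsSymm) (z : Fin n → ℤ) : (A *ᵥ z) ⬝ᵥ (A *ᵥ z) ≤ 4 * (z ⬝ᵥ z) := by
  have hB : (A.map ((↑) : ℤ → ℝ)).IsHermitian := by
    rw [IsHermitian, conjTranspose_eq_transpose_of_trivial, ← transpose_map, hsymm.eq]
  set f := Int.castRingHom ℝ
  have hcast : A.map ((↑) : ℤ → ℝ) *ᵥ (f ∘ z) = f ∘ (A *ᵥ z) :=
    funext fun i => (f.map_mulVec A z i).symm
  have hR := hB.dotProduct_mulVec_self_le hcyc (f ∘ z)
  rw [hcast, ← f.map_dotProduct, ← f.map_dotProduct, eq_intCast, eq_intCast] at hR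
  exact_mod_cast hR

theorem Int.ne_zero_iff_ne_zero_of_mul_add_mul_even {a b p q t : ℤ}
    (ha : a = -1 ∨ a = 0 ∨ a = 1) (hb : b = -1 ∨ b = 0 ∨ b = 1) (hp : IsUnit p) (hq : IsUnit q)
    (h : a * p + b * q + 2 * t = 0) : a ≠ 0 ↔ b ≠ 0 := by
  rcases Int.isUnit_iff.mp hp with rfl | rfl <;> rcases Int.isUnit_iff.mp hq with rfl | rfl <;>
    rcases ha with rfl | rfl | rfl <;> rcases hb with rfl | rfl | rfl <;> omega

theorem IsCyclo.mul_add_mul_add_two_mul_eq_zero {n : ℕ} {A : Matrix (Fin n) (Fin n) ℤ}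
    (hcyc : IsCyclo A) (hsymm : A.IsSymm) {v w x : Fin n} (hvw : v ≠ w) (hvx : v ≠ x)
    (hwx : w ≠ x) (hv : A v v = 0) (hw : A w w = 0) (hnadj : A v w = 0) (hxv : IsUnit (A v x))
    (hxw : IsUnit (A w x)) (hx : IsUnit (A x x)) {y : Fin n} (hyv : y ≠ v) (hyw : y ≠ w)
    (hyx : y ≠ x) : A y v * A v x + A y w * A w x + 2 * (A y x * A x x) = 0 := by
  have hp := Int.isUnit_mul_self hxv
  have hq := Int.isUnit_mul_self hxw
  have hc := Int.isUnit_mul_self hx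
  set z : Fin n → ℤ := Pi.single v (A v x) + Pi.single w (A w x) + Pi.single x (2 * A x x)
  have hAz : ∀ i, (A *ᵥ z) i = A i v * A v x + A i w * A w x + 2 * (A i x * A x x) := by
    intro i; simp only [z, mulVec, dotProduct_add, dotProduct_single]; ring
  have hzz : z ⬝ᵥ z = 6 := by
    simp only [z, dotProduct_add, dotProduct_single, Pi.add_apply, Pi.single_apply, hvw, hvx, hwx,
      hvw.symm, hvx.symm, hwx.symm, if_true, if_false]
    linear_combination hp + hq + 4 * hc
  have hAzv : (A *ᵥ z) v = 2 * (A v x * A x x) := by rw [hAz, hv, hnadj]; ring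
  have hAzw : (A *ᵥ z) w = 2 * (A w x * A x x) := by rw [hAz, hsymm.apply v w, hnadj, hw]; ring
  have hAzx : (A *ᵥ z) x = 4 := by
    rw [hAz, hsymm.apply v x, hsymm.apply w x]; linear_combination hp + hq + 2 * hc
  have hbound : (A *ᵥ z) ⬝ᵥ (A *ᵥ z) ≤ ∑ i ∈ {v, w, x}, (A *ᵥ z) i * (A *ᵥ z) i := by
    calc (A *ᵥ z) ⬝ᵥ (A *ᵥ z) ≤ 4 * (z ⬝ᵥ z) := hcyc.dotProduct_mulVec_self_le hsymm z
      _ = ∑ i ∈ {v, w, x}, (A *ᵥ z) i * (A *ᵥ z) i := by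
        rw [Finset.sum_insert (by simp [hvw, hvx]), Finset.sum_insert (by simp [hwx]),
          Finset.sum_singleton, hAzv, hAzw, hAzx, hzz]
        linear_combination -4 * (A x x * A x x) * (hp + hq) - 8 * hc
  rw [← hAz]
  exact eq_zero_of_dotProduct_self_le_sum hbound (by simp [hyv, hyw, hyx])

/-- In a cyclotomic charged signed graph, two nonadjacent neutral
vertices `v, w` with a common charged neighbour `x` have the same neighbours. -/
theorem neutral_vertices_with_common_charged_neighbour_share_neighbours
    {n : ℕ} (A : Matrix (Fin n) (Fin n) ℤ) (hsymm : A.IsSymm)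
    (hent : ∀ i j, A i j = -1 ∨ A i j = 0 ∨ A i j = 1)
    (hcyc : IsCyclo A)
    (v w x : Fin n) (hvw : v ≠ w) (hvx : v ≠ x) (hwx : w ≠ x)
    (hv : A v v = 0) (hw : A w w = 0)
    (hnadj : A v w = 0)
    (hx : A x x ≠ 0)
    (hxv : A v x ≠ 0) (hxw : A w x ≠ 0) :
    ∀ y : Fin n, y ≠ v → y ≠ w → (A y v ≠ 0 ↔ A y w ≠ 0) := by
  intro y hyv hyw
  by_cases hyx : y = x
  · subst hyx
    rw [hsymm.apply v y, hsymm.apply w y]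
    exact iff_of_true hxv hxw
  have hunit : ∀ i j, A i j ≠ 0 → IsUnit (A i j) := fun i j hij => by
    rw [Int.isUnit_iff]; rcases hent i j with h | h | h <;> omega
  have hsum := hcyc.mul_add_mul_add_two_mul_eq_zero hsymm hvw hvx hwx hv hw hnadj
    (hunit _ _ hxv) (hunit _ _ hxw) (hunit _ _ hx) hyv hyw hyx
  exact Int.ne_zero_iff_ne_zero_of_mul_add_mul_even (hent y v) (hent y w) (hunit _ _ hxv)
    (hunit _ _ hxw) hsum
end

section
/- Let A be a connected cyclotomic charged signed graph with two distinct adjacent charged vertices v and w whose charges have the same sign: A v w ≠ 0 and A v v = A w w ≠ 0. Then the vertex w can be deleted without disconnecting the graph: the simple graph induced on the vertices other than w (with i ~ j iff i ≠ j and A i j ≠ 0) is still connected. -/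
open Matrix

/-!
Let `c = A v v = A w w` and `a = A v w`, both `±1`. The matrix `c • A` is again cyclotomic and has
charge `1` at `v` and `w`, so `x = e_v + c a e_w` has Rayleigh quotient `4 / 2 = 2`, the largest
possible; hence `x` is an eigenvector of `c • A` for `2`. Its coordinate at any other vertex `u`
gives `A u v = -c a A u w`, so every neighbour of `w` other than `v` is a neighbour of `v`. Sending
`w` to `v` then turns every walk of the graph into a walk avoiding `w`.
-/

namespace Matrix

variable {ι : Type*} [Fintype ι] [DecidableEq ι]

open scoped MatrixOrder in
theorem IsHermitian.mulVec_eq_smul_of_dotProduct_mulVec_eq_s18 {B : Matrix ι ι ℝ} (hB : B.IsHermitian)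
    {r : ℝ} (hr : ∀ μ ∈ spectrum ℝ B, μ ≤ r) {x : ι → ℝ} (hx : x ⬝ᵥ B *ᵥ x = r * (x ⬝ᵥ x)) :
    B *ᵥ x = r • x := by
  have hpsd : (r • 1 - B).PosSemidef := by
    rw [← Algebra.algebraMap_eq_smul_one]
    exact (le_algebraMap_iff_spectrum_le hB).mpr hr
  have hzero : (r • 1 - B) *ᵥ x = 0 := by
    refine (hpsd.dotProduct_mulVec_zero_iff x).mp ?_
    rw [star_trivial, sub_mulVec, smul_mulVec, one_mulVec, dotProduct_sub, dotProduct_smul, hx,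
      smul_eq_mul, sub_self]
  rw [sub_mulVec, smul_mulVec, one_mulVec, sub_eq_zero] at hzero
  exact hzero.symm

theorem IsHermitian.mulVec_single_add_single_eq {M : Matrix ι ι ℝ} (hM : M.IsHermitian)
    (hspec : ∀ μ ∈ spectrum ℝ M, μ ≤ 2) {v w : ι} (hvw : v ≠ w) (hv : M v v = 1) (hw : M w w = 1)
    (hs : M v w ^ 2 = 1) :
    M *ᵥ (Pi.single v 1 + Pi.single w (M v w)) =
      (2 : ℝ) • (Pi.single v 1 + Pi.single w (M v w)) := by
  refine hM.mulVec_eq_smul_of_dotProduct_mulVec_eq_s18 hspec ?_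
  have hwv : M w v = M v w := by simpa using congrFun (congrFun hM.eq v) w
  simp only [mulVec_add, mulVec_single, MulOpposite.op_one, one_smul, op_smul_eq_smul,
    dotProduct_add, add_dotProduct, single_dotProduct, dotProduct_single, dotProduct_smul,
    col_apply, Pi.add_apply, Pi.single_eq_same, Pi.single_eq_of_ne hvw, Pi.single_eq_of_ne hvw.symm,
    hv, hw, hwv, smul_eq_mul, mul_one, one_mul, add_zero, zero_add]
  linear_combination hs

end Matrix

theorem IsCyclo.smul {n : ℕ} {A : Matrix (Fin n) (Fin n) ℤ} (hA : IsCyclo A) {c : ℤ}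
    (hc : |c| = 1) : IsCyclo (c • A) := by
  have hc0 : (c : ℝ) ≠ 0 := by rintro h; simp_all
  have hmap : (c • A).map ((↑) : ℤ → ℝ) = Units.mk0 (c : ℝ) hc0 • A.map ((↑) : ℤ → ℝ) := by
    ext i j
    simp only [map_apply, Matrix.smul_apply, Units.smul_mk0, smul_eq_mul, Int.cast_mul]
  intro μ hμ
  rw [hmap, spectrum.unit_smul_eq_smul] at hμ
  obtain ⟨ν, hν, rfl⟩ := Set.mem_smul_set.mp hμ
  rw [Units.smul_mk0, smul_eq_mul, abs_mul, ← Int.cast_abs, hc, Int.cast_one, one_mul]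
  exact hA ν hν

theorem IsCyclo.apply_eq_neg_mul_of_like_charged {n : ℕ} {A : Matrix (Fin n) (Fin n) ℤ}
    (hA : IsCyclo A) (hsymm : A.IsSymm) {v w : Fin n} (hvw : v ≠ w) (hch : A v v = A w w)
    (hv : A v v ^ 2 = 1) (ha : A v w ^ 2 = 1) {u : Fin n} (huv : u ≠ v) (huw : u ≠ w) :
    A u v = -(A v v * A v w * A u w) := by
  set c := A v v
  set M := (c • A).map ((↑) : ℤ → ℝ)
  have hM_apply : ∀ i j, M i j = c * A i j := fun i j => by
    simp only [M, map_apply, Matrix.smul_apply, smul_eq_mul, Int.cast_mul]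
  have hc2 : (c : ℝ) ^ 2 = 1 := by exact_mod_cast hv
  have ha2 : (A v w : ℝ) ^ 2 = 1 := by exact_mod_cast ha
  have hM : M.IsHermitian := isHermitian_iff_isSymm.mpr ((hsymm.smul c).map _)
  have hspec : ∀ μ ∈ spectrum ℝ M, μ ≤ 2 := fun μ hμ =>
    (le_abs_self μ).trans ((hA.smul (by rcases sq_eq_one_iff.mp hv with h | h <;> simp [h])) μ hμ)
  have hMv : M v v = 1 := by rw [hM_apply, ← sq, hc2]
  have hMw : M w w = 1 := by rw [hM_apply, ← hch, ← sq, hc2]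
  have hMa : M v w ^ 2 = 1 := by rw [hM_apply, mul_pow, hc2, ha2, one_mul]
  have hrow := congrFun (hM.mulVec_single_add_single_eq hspec hvw hMv hMw hMa) u
  simp only [mulVec_add, mulVec_single, MulOpposite.op_one, one_smul, op_smul_eq_smul,
    Pi.add_apply, Pi.smul_apply, col_apply, smul_eq_mul, Pi.single_eq_of_ne huv,
    Pi.single_eq_of_ne huw, add_zero, mul_zero, hM_apply] at hrow
  have hreal : (A u v : ℝ) = -(c * A v w * A u w) := by
    linear_combination c * hrow - (A u v + c * A v w * A u w) * hc2
  exact_mod_cast hreal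

theorem SimpleGraph.Connected.induce_ne_of_neighborSet_diff_subset {V : Type*} {G : SimpleGraph V}
    (hG : G.Connected) {v w : V} (hvw : v ≠ w) (h : G.neighborSet w \ {v} ⊆ G.neighborSet v) :
    (G.induce {i | i ≠ w}).Connected := by
  classical
  have : Nonempty {i | i ≠ w} := ⟨⟨v, hvw⟩⟩
  let f : V → {i | i ≠ w} := fun u => if hu : u = w then ⟨v, hvw⟩ else ⟨u, hu⟩
  have hf_ne : ∀ u (hu : u ≠ w), f u = ⟨u, hu⟩ := fun u hu => dif_neg hu
  have hf_w : f w = ⟨v, hvw⟩ := dif_pos rfl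
  have hf_adj_w : ∀ b, G.Adj w b → (G.induce {i | i ≠ w}).Reachable (f w) (f b) := by
    intro b hwb
    have hbw : b ≠ w := hwb.ne.symm
    rw [hf_w, hf_ne b hbw]
    by_cases hbv : b = v
    · subst hbv; rfl
    · exact Adj.reachable (h ⟨hwb, hbv⟩)
  have hf : ∀ a b, G.Adj a b → (G.induce {i | i ≠ w}).Reachable (f a) (f b) := by
    intro a b hab
    by_cases haw : a = w
    · subst haw; exact hf_adj_w b hab
    by_cases hbw : b = w
    · subst hbw; exact (hf_adj_w a hab.symm).symm
    rw [hf_ne a haw, hf_ne b hbw]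
    exact Adj.reachable hab
  have hreach : ∀ a b, G.Reachable a b → (G.induce {i | i ≠ w}).Reachable (f a) (f b) := by
    rintro a b ⟨p⟩
    induction p with
    | nil => rfl
    | cons hadj _ ih => exact (hf _ _ hadj).trans ih
  refine ⟨fun a b => ?_⟩
  simpa only [hf_ne a a.2, hf_ne b b.2] using hreach a b (hG.preconnected a b)

/-- In a connected cyclotomic charged signed graph with two adjacent
charged vertices `v, w` of the same charge, the vertex `w` can be deleted without
disconnecting the graph. -/
theorem delete_like_charged_vertex_keeps_connected
    {n : ℕ} (A : Matrix (Fin n) (Fin n) ℤ) (hsymm : A.IsSymm)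
    (hent : ∀ i j, A i j = -1 ∨ A i j = 0 ∨ A i j = 1)
    (hcyc : IsCyclo A)
    (hconn : (SimpleGraph.fromRel (fun i j => A i j ≠ 0)).Connected)
    (v w : Fin n) (hvw : v ≠ w)
    (hadj : A v w ≠ 0)
    (hch : A v v = A w w) (hch0 : A v v ≠ 0) :
    (SimpleGraph.induce {i : Fin n | i ≠ w}
      (SimpleGraph.fromRel (fun i j => A i j ≠ 0))).Connected := by
  have hadj_iff :
      ∀ i j, (SimpleGraph.fromRel (fun i j => A i j ≠ 0)).Adj i j ↔ i ≠ j ∧ A i j ≠ 0 := by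
    intro i j
    rw [SimpleGraph.fromRel_adj, hsymm.apply j i, or_self]
  have hsq : ∀ i j, A i j ≠ 0 → A i j ^ 2 = 1 := fun i j h => by
    rcases hent i j with h' | h' | h' <;> simp_all
  refine hconn.induce_ne_of_neighborSet_diff_subset hvw ?_
  rintro u ⟨hu, huv : u ≠ v⟩
  obtain ⟨hwu, hA⟩ := (hadj_iff w u).mp hu
  refine (hadj_iff v u).mpr ⟨Ne.symm huv, fun hvu => hA ?_⟩
  have hrel := hcyc.apply_eq_neg_mul_of_like_charged hsymm hvw hch (hsq v v hch0) (hsq v w hadj)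
    huv hwu.symm
  rw [hsymm.apply v u, hvu, zero_eq_neg] at hrel
  rw [hsymm.apply u w]
  simpa [hch0, hadj] using hrel
end
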